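/- Inversion is continuous on the set REV of reversible cellular automata with the uniform Bernoulli metric: if c is reversible and d is reversible with r(d) > r(c) and r(d⁻¹) > r(c⁻¹), then δ(c⁻¹, d⁻¹) ≤ (2·r(c⁻¹)+1) · δ(c, d). -/

import Mathlib

open MeasureTheory Filter Function

section BasicDefs

variable {A : Type}

/-- `f` admits a local rule of radius `r`: there is `F` depending only on
coordinates in `[-r, r]` such that `f x i = F (σ^i x)`. -/
def HasRadius (r : ℕ) (f : (ℤ → A) → (ℤ → A)) : Prop :=
  ∃ F : (ℤ → A) → A,
    (∀ x y : ℤ → A, (∀ j : ℤ, |j| ≤ (r : ℤ) → x j = y j) → F x = F y) ∧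
    ∀ (x : ℤ → A) (i : ℤ), f x i = F fun j => x (i + j)

/-- A cellular automaton is a map admitting a local rule of some radius. -/
def IsCA (f : (ℤ → A) → (ℤ → A)) : Prop := ∃ r, HasRadius r f

/-- The minimal radius of a cellular automaton. -/
noncomputable def rad (f : (ℤ → A) → (ℤ → A)) : ℕ := sInf {r : ℕ | HasRadius r f}

/-- Centered words of radius `r`. -/
def Word (A : Type) (r : ℕ) := (Finset.Icc (-(r : ℤ)) (r : ℤ) : Finset ℤ) → A

/-- The difference set of `c` and `d` for radius `r`: centered words of radius `r`
on which the images of `c` and `d` differ at the central cell. -/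
def diffSet (r : ℕ) (c d : (ℤ → A) → (ℤ → A)) : Set (Word A r) :=
  {w | ∃ x : ℤ → A, (∀ j : (Finset.Icc (-(r : ℤ)) (r : ℤ) : Finset ℤ), x j.1 = w j) ∧
        c x 0 ≠ d x 0}

/-- The shift map. -/
def shift (x : ℤ → A) : ℤ → A := fun i => x (i + 1)

/-- Preimages of the centered word `v` of radius `n` under the word function of `c`
used with radius `r`: centered words `u` of radius `n + r` such that some (equivalently,
by the radius assumption, every) configuration extending `u` maps under `c` to a
configuration extending `v` in its central part. -/
def wordPreimages (c : (ℤ → A) → (ℤ → A)) (n r : ℕ) (v : Word A n) :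
    Set (Word A (n + r)) :=
  {u | ∃ x : ℤ → A,
        (∀ j : (Finset.Icc (-((n + r : ℕ) : ℤ)) ((n + r : ℕ) : ℤ) : Finset ℤ), x j.1 = u j) ∧
        ∀ j : (Finset.Icc (-(n : ℤ)) (n : ℤ) : Finset ℤ), c x j.1 = v j}

-- The Cantor metric on configurations.
open Classical in
noncomputable def dC (x y : ℤ → A) : ℝ :=
  ∑' i : ℤ, if x i ≠ y i then (2 : ℝ) ^ (-|i|) else 0

/-- The Besicovitch pseudodistance on configurations. -/
noncomputable def dB (x y : ℤ → A) : ℝ :=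
  limsup (fun n : ℕ =>
    (({i : ℤ | |i| ≤ (n : ℤ) ∧ x i ≠ y i}.ncard : ℝ)) / (2 * (n : ℝ) + 1)) atTop

end BasicDefs

section FintypeDefs

variable {A : Type} [Fintype A]

/-- The normalized size of the difference set for radius `r`. -/
noncomputable def deltaR (r : ℕ) (c d : (ℤ → A) → (ℤ → A)) : ℝ :=
  (diffSet r c d).ncard / (Fintype.card A : ℝ) ^ (2 * r + 1)

/-- The uniform Bernoulli distance between two cellular automata (computed with the
common radius `max (rad c) (rad d)`; by radius-independence this is the canonical value). -/
noncomputable def delta (c d : (ℤ → A) → (ℤ → A)) : ℝ :=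
  deltaR (max (rad c) (rad d)) c d

end FintypeDefs

section MeasureDefs

variable {A : Type} [MeasurableSpace A]

/-- The pseudometric on cellular automata induced by the measure `μ`:
the measure of the cylinder of the difference set, i.e. of the set of
configurations on which `c` and `d` differ at coordinate `0`. -/
noncomputable def deltaMu (μ : Measure (ℤ → A)) (c d : (ℤ → A) → (ℤ → A)) : ℝ :=
  (μ {x | c x 0 ≠ d x 0}).toReal

/-- `c` preserves the measure `μ`. -/
def Preserves (μ : Measure (ℤ → A)) (c : (ℤ → A) → (ℤ → A)) : Prop :=
  ∀ B : Set (ℤ → A), MeasurableSet B → μ (c ⁻¹' B) = μ B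

/-- `μ` is shift-invariant. -/
def ShiftInvariant (μ : Measure (ℤ → A)) : Prop :=
  ∀ B : Set (ℤ → A), MeasurableSet B → μ (shift ⁻¹' B) = μ B

end MeasureDefs


/-!
Let `μ` be the uniform Bernoulli measure. A reversible automaton `d` preserves `μ`, so
`δ(c⁻¹, d⁻¹) = μ{x | c⁻¹ x 0 ≠ d⁻¹ x 0} = μ{y | c⁻¹ (d y) 0 ≠ c⁻¹ (c y) 0}`. On that event `c y`
and `d y` differ at some cell of `[-r(c⁻¹), r(c⁻¹)]`, and by shift invariance each of these
`2 r(c⁻¹) + 1` events has measure `δ(c, d)`.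

Measures of events depending on finitely many cells are computed by counting patterns on a
window. That `d` preserves them is the balance property: a word of minimal (resp. maximal)
number of preimages passes this number on to every longer word containing it, so gluing a minimal
word to a maximal one shows that all long words have the same number of preimages, necessarily
`|A| ^ (2 r(d))`. The inverse `d⁻¹` is itself a cellular automaton, by compactness of `A ^ ℤ`.
-/

open Finset Function

section Patterns

attribute [local instance] Classical.propDecidable

variable {A : Type} [Nonempty A]

noncomputable def pad (t : Finset ℤ) (u : t → A) : ℤ → A :=
  fun j => if h : j ∈ t then u ⟨j, h⟩ else Classical.arbitrary A

lemma pad_apply {t : Finset ℤ} (u : t → A) (j : t) : pad t u j = u j := by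
  simp [pad]

lemma DependsOn.apply_pad {β : Type*} {t : Finset ℤ} {g : (ℤ → A) → β}
    (hg : DependsOn g (t : Set ℤ)) (x : ℤ → A) : g (pad t fun j => x j) = g x :=
  hg fun j hj => pad_apply (fun j : t => x j) ⟨j, hj⟩

variable [Fintype A]

/-- For `P` depending only on the cells in `t`, the number of `t`-patterns of configurations
satisfying `P`. -/
noncomputable def patternCount (t : Finset ℤ) (P : (ℤ → A) → Prop) : ℕ :=
  #{u : t → A | P (pad t u)}

lemma patternCount_mono {t : Finset ℤ} {P Q : (ℤ → A) → Prop} (h : ∀ x, P x → Q x) :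
    patternCount t P ≤ patternCount t Q :=
  card_le_card fun u hu => by
    simp only [mem_filter] at hu ⊢
    exact ⟨hu.1, h _ hu.2⟩

lemma patternCount_exists_le_sum {ι : Type*} (t : Finset ℤ) (I : Finset ι)
    (Q : ι → (ℤ → A) → Prop) :
    patternCount t (fun x => ∃ i ∈ I, Q i x) ≤ ∑ i ∈ I, patternCount t (Q i) := by
  unfold patternCount
  refine le_trans (card_le_card fun u hu => ?_) card_biUnion_le
  simp only [mem_filter, mem_biUnion, mem_univ, true_and] at hu ⊢
  exact hu

lemma patternCount_true (t : Finset ℤ) :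
    patternCount t (fun _ : ℤ → A => True) = Fintype.card A ^ #t := by
  simp [patternCount]

lemma patternCount_union {s t : Finset ℤ} (hst : Disjoint s t) {P Q : (ℤ → A) → Prop}
    (hP : DependsOn P (s : Set ℤ)) (hQ : DependsOn Q (t : Set ℤ)) :
    patternCount (s ∪ t) (fun x => P x ∧ Q x) = patternCount s P * patternCount t Q := by
  let e := Equiv.piFinsetUnion (fun _ => A) hst
  have hpad : ∀ uv, (P (pad (s ∪ t) (e uv)) ↔ P (pad s uv.1)) ∧
      (Q (pad (s ∪ t) (e uv)) ↔ Q (pad t uv.2)) := fun uv => by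
    refine ⟨iff_of_eq (hP fun j hj => ?_), iff_of_eq (hQ fun j hj => ?_)⟩
    · rw [pad_apply _ ⟨j, mem_union_left _ hj⟩, pad_apply _ ⟨j, hj⟩]
      exact Equiv.piFinsetUnion_left _ hst hj _
    · rw [pad_apply _ ⟨j, mem_union_right _ hj⟩, pad_apply _ ⟨j, hj⟩]
      exact Equiv.piFinsetUnion_right _ hst hj _
  rw [patternCount, patternCount, patternCount, ← card_product, ← filter_product,
    ← card_map e.toEmbedding, univ_product_univ]
  congr 1
  ext u
  obtain ⟨uv, rfl⟩ := e.surjective u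
  simp [hpad uv]

lemma patternCount_of_subset {s t : Finset ℤ} (hst : s ⊆ t) {P : (ℤ → A) → Prop}
    (hP : DependsOn P (s : Set ℤ)) :
    patternCount t P = Fintype.card A ^ (#t - #s) * patternCount s P := by
  have h := patternCount_union (disjoint_sdiff (s := s) (t := t)) hP
    (Q := fun _ => True) (fun _ _ _ => rfl)
  simp only [and_true, union_sdiff_of_subset hst, patternCount_true,
    card_sdiff_of_subset hst] at h
  rw [h, mul_comm]

lemma patternCount_translate (i a b : ℤ) (P : (ℤ → A) → Prop) :
    patternCount (Icc (a + i) (b + i)) P =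
      patternCount (Icc a b) (fun x => P fun j => x (j - i)) := by
  have mem_iff : ∀ j, j ∈ Icc (a + i) (b + i) ↔ j - i ∈ Icc a b := fun j => by
    simp only [mem_Icc]; omega
  let e : Icc a b ≃ Icc (a + i) (b + i) :=
    { toFun := fun k => ⟨k + i, (mem_iff _).mpr (by simp)⟩
      invFun := fun k => ⟨k - i, (mem_iff _).mp k.2⟩
      left_inv := fun k => by ext; simp
      right_inv := fun k => by ext; simp }
  have hpad : ∀ u : Icc a b → A, pad _ (u ∘ e.symm) = fun j => pad _ u (j - i) := fun u => by
    ext j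
    by_cases hj : j ∈ Icc (a + i) (b + i)
    · rw [pad_apply _ ⟨j, hj⟩, pad_apply _ ⟨j - i, (mem_iff _).mp hj⟩]; rfl
    · simp [pad, hj, (mem_iff j).not.mp hj]
  unfold patternCount
  rw [← card_map (Equiv.arrowCongr e (Equiv.refl A)).toEmbedding]
  congr 1
  ext u
  obtain ⟨v, rfl⟩ := (Equiv.arrowCongr e (Equiv.refl A)).surjective u
  simp only [mem_map_equiv, mem_filter, mem_univ, true_and]
  rw [Equiv.symm_apply_apply, ← hpad]
  rfl

lemma patternCount_forall_eq (t : Finset ℤ) (w : ℤ → A) :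
    patternCount t (fun x => ∀ j ∈ t, x j = w j) = 1 := by
  refine card_eq_one.mpr ⟨fun j => w j, eq_singleton_iff_unique_mem.mpr ⟨?_, fun u hu => ?_⟩⟩
  · simp only [mem_filter, mem_univ, true_and]
    exact fun j hj => pad_apply _ ⟨j, hj⟩
  · simp only [mem_filter, mem_univ, true_and] at hu
    exact funext fun j => (pad_apply u j).symm.trans (hu j j.2)

end Patterns

section Radius

variable {A : Type} {f : (ℤ → A) → (ℤ → A)} {r : ℕ}

lemma HasRadius.mono (h : HasRadius r f) {r' : ℕ} (hrr : r ≤ r') : HasRadius r' f := by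
  obtain ⟨F, hF, hfF⟩ := h
  exact ⟨F, fun x y hxy => hF x y fun j hj => hxy j (hj.trans (by exact_mod_cast hrr)), hfF⟩

lemma IsCA.hasRadius_rad (h : IsCA f) : HasRadius (rad f) f := Nat.sInf_mem h

lemma HasRadius.dependsOn (h : HasRadius r f) (i : ℤ) :
    DependsOn (fun x => f x i) (Icc (i - r) (i + r) : Set ℤ) := by
  obtain ⟨F, hF, hfF⟩ := h
  intro x y hxy
  simp only [hfF]
  exact hF _ _ fun j hj => hxy _ (by simp only [coe_Icc, Set.mem_Icc]; rw [abs_le] at hj; omega)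

lemma HasRadius.apply_translate (h : HasRadius r f) (x : ℤ → A) (i k : ℤ) :
    f (fun j => x (j - i)) k = f x (k - i) := by
  obtain ⟨F, -, hfF⟩ := h
  simp only [hfF, sub_add_eq_add_sub]

lemma HasRadius.dependsOn_forall_apply_eq (hf : HasRadius r f) (a b : ℤ) (w : ℤ → A) :
    DependsOn (fun x => ∀ j ∈ Icc a b, f x j = w j) (Icc (a - r) (b + r) : Set ℤ) := by
  intro x y hxy
  refine propext (forall₂_congr fun j hj => ?_)
  rw [show f x j = f y j from hf.dependsOn j fun k hk => hxy k ?_]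
  simp only [coe_Icc, Set.mem_Icc, mem_Icc] at hj hk ⊢
  omega

lemma HasRadius.dependsOn_apply_ne {c d : (ℤ → A) → (ℤ → A)} (hc : HasRadius r c)
    (hd : HasRadius r d) (i : ℤ) :
    DependsOn (fun x => c x i ≠ d x i) (Icc (i - r) (i + r) : Set ℤ) := fun x y hxy => by
  simp only [show c x i = c y i from hc.dependsOn i hxy, show d x i = d y i from hd.dependsOn i hxy]

end Radius

section PreimageCount

attribute [local instance] Classical.propDecidable

variable {A : Type} [Nonempty A] [Fintype A] {f : (ℤ → A) → (ℤ → A)} {r : ℕ}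

noncomputable def preimageCount (f : (ℤ → A) → (ℤ → A)) (r : ℕ) (a b : ℤ) (w : ℤ → A) : ℕ :=
  patternCount (Icc (a - r) (b + r)) fun x => ∀ j ∈ Icc a b, f x j = w j

lemma preimageCount_congr {a b : ℤ} {w w' : ℤ → A} (h : ∀ j ∈ Icc a b, w j = w' j) :
    preimageCount f r a b w = preimageCount f r a b w' := by
  unfold preimageCount
  congr 1
  exact funext fun x => propext (forall₂_congr fun j hj => by rw [h j hj])

lemma sum_preimageCount (a b : ℤ) (Z : Finset (Icc a b → A)) :
    ∑ z ∈ Z, preimageCount f r a b (pad _ z) =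
      patternCount (Icc (a - r) (b + r)) (fun x => (fun j : Icc a b => f x j) ∈ Z) := by
  convert sum_card_fiberwise_eq_card_filter univ Z
    (fun u (j : Icc a b) => f (pad (Icc (a - r) (b + r)) u) j) using 2 with z
  on_goal 2 => rw [patternCount]; congr
  rw [preimageCount, patternCount]
  congr 1
  ext u
  simp only [mem_filter, mem_univ, true_and, funext_iff, Subtype.forall]
  exact forall₂_congr fun j hj => by rw [pad_apply z ⟨j, hj⟩]

lemma HasRadius.preimageCount_translate (hf : HasRadius r f) (i a b : ℤ) (w : ℤ → A) :
    preimageCount f r (a + i) (b + i) w = preimageCount f r a b (fun j => w (j + i)) := by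
  unfold preimageCount
  rw [show a + i - r = a - r + i by ring, show b + i + r = b + r + i by ring,
    patternCount_translate]
  congr 1
  refine funext fun x => propext ⟨fun h j hj => ?_, fun h j hj => ?_⟩
  · have := h (j + i) (by simp only [mem_Icc] at hj ⊢; omega)
    rwa [hf.apply_translate, add_sub_cancel_right] at this
  · have := h (j - i) (by simp only [mem_Icc] at hj ⊢; omega)
    rw [hf.apply_translate, this]
    simp

lemma HasRadius.sum_preimageCount_extend (hf : HasRadius r f) {a b a' b' : ℤ} (hab : a ≤ b)
    (ha : a' ≤ a) (hb : b ≤ b') (w : ℤ → A) :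
    ∑ z ∈ {z : Icc a' b' → A | ∀ j ∈ Icc a b, pad _ z j = w j},
        preimageCount f r a' b' (pad _ z) =
      Fintype.card A ^ (#(Icc a' b') - #(Icc a b)) * preimageCount f r a b w := by
  have hsub : Icc (a - r) (b + r) ⊆ Icc (a' - r) (b' + r) := Icc_subset_Icc (by omega) (by omega)
  have hmem : ∀ x : ℤ → A, ((fun j : Icc a' b' => f x j) ∈
      ({z | ∀ j ∈ Icc a b, pad _ z j = w j} : Finset (Icc a' b' → A))) ↔
      ∀ j ∈ Icc a b, f x j = w j := fun x => by
    simp only [mem_filter, mem_univ, true_and]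
    refine forall₂_congr fun j hj => ?_
    rw [pad_apply _ ⟨j, Icc_subset_Icc ha hb hj⟩]
  rw [sum_preimageCount]
  simp only [hmem]
  rw [preimageCount, patternCount_of_subset hsub (hf.dependsOn_forall_apply_eq a b w)]
  congr 2
  simp only [Int.card_Icc]
  omega

/-- The counts of the extensions of `w` to `[a', b']` average to the count of `w` on `[a, b]`,
so they all equal it as soon as it bounds them on one side. -/
lemma HasRadius.preimageCount_extend_eq (hf : HasRadius r f) {a b a' b' : ℤ} (hab : a ≤ b)
    (ha : a' ≤ a) (hb : b ≤ b') {w : ℤ → A}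
    (hext : (∀ w', preimageCount f r a b w ≤ preimageCount f r a' b' w') ∨
      (∀ w', preimageCount f r a' b' w' ≤ preimageCount f r a b w)) :
    preimageCount f r a' b' w = preimageCount f r a b w := by
  set Z : Finset (Icc a' b' → A) := {z | ∀ j ∈ Icc a b, pad _ z j = w j}
  have hZ : #Z = Fintype.card A ^ (#(Icc a' b') - #(Icc a b)) := by
    have h := patternCount_of_subset (Icc_subset_Icc ha hb)
      (P := fun x => ∀ j ∈ Icc a b, x j = w j)
      fun x y hxy => propext (forall₂_congr fun j hj => by rw [hxy j (by simpa using hj)])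
    rw [patternCount_forall_eq, mul_one, patternCount] at h
    rw [← h]
    simp only [Z]
    congr
  have hsum : ∑ z ∈ Z, preimageCount f r a b w = ∑ z ∈ Z, preimageCount f r a' b' (pad _ z) := by
    rw [hf.sum_preimageCount_extend hab ha hb, sum_const, smul_eq_mul, hZ]
  have hw : (fun j : Icc a' b' => w j) ∈ Z := by
    simp only [Z, mem_filter, mem_univ, true_and]
    exact fun j hj => pad_apply _ ⟨j, Icc_subset_Icc ha hb hj⟩
  rw [preimageCount_congr (w' := pad _ fun j : Icc a' b' => w j)
    fun j hj => (pad_apply (fun j : Icc a' b' => w j) ⟨j, hj⟩).symm]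
  rcases hext with h | h
  · exact ((sum_eq_sum_iff_of_le fun z _ => h _).mp hsum _ hw).symm
  · exact (sum_eq_sum_iff_of_le fun z _ => h _).mp hsum.symm _ hw

/-- A preimage of `w` is determined on the inner window `[a + s, b - s]` by `w`, through the
local rule of `f⁻¹`, so only its `2 (r + s)` outer cells are free. -/
lemma preimageCount_le (hinj : Injective f) {s : ℕ} (hs : HasRadius s (invFun f)) {a b : ℤ}
    (hab : a + 2 * s ≤ b) (w : ℤ → A) :
    preimageCount f r a b w ≤ Fintype.card A ^ (2 * (r + s)) := by
  set T := Icc (a - r) (b + r)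
  set inner := Icc (a + s) (b - s)
  have hin : inner ⊆ T := Icc_subset_Icc (by omega) (by omega)
  have hinjOn : Set.InjOn
      (fun (u : T → A) (j : (T \ inner : Finset ℤ)) => u ⟨j, (mem_sdiff.mp j.2).1⟩)
      {u | ∀ j ∈ Icc a b, f (pad T u) j = w j} := by
    intro u hu v hv huv
    funext j
    by_cases hj : (j : ℤ) ∈ inner
    · rw [← pad_apply u, ← pad_apply v, ← leftInverse_invFun hinj (pad T u),
        ← leftInverse_invFun hinj (pad T v)]
      refine hs.dependsOn j fun k hk => ?_
      simp only [inner, coe_Icc, Set.mem_Icc, mem_Icc] at hj hk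
      rw [hu k (by simp only [mem_Icc]; omega), hv k (by simp only [mem_Icc]; omega)]
    · exact congrFun huv ⟨j, mem_sdiff.mpr ⟨j.2, hj⟩⟩
  calc preimageCount f r a b w
      ≤ #(univ : Finset ((T \ inner : Finset ℤ) → A)) :=
        card_le_card_of_injOn _ (fun _ _ => mem_univ _) fun u hu v hv =>
          hinjOn (by simpa using hu) (by simpa using hv)
    _ = Fintype.card A ^ (2 * (r + s)) := by
        rw [card_univ, Fintype.card_fun, Fintype.card_coe, card_sdiff_of_subset hin]
        simp only [T, inner, Int.card_Icc]
        congr 1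
        omega

lemma HasRadius.exists_preimageCount_eq (hf : HasRadius r f) (hinj : Injective f) {s : ℕ}
    (hs : HasRadius s (invFun f)) :
    ∃ μ, ∀ (a b : ℤ) w, a + 2 * s ≤ b → preimageCount f r a b w = μ := by
  set V : Set ℕ := {n | ∃ (a b : ℤ) (w : ℤ → A), a + 2 * s ≤ b ∧ preimageCount f r a b w = n}
  have hV : V.Nonempty := ⟨_, 0, 2 * s, fun _ => Classical.arbitrary A, by simp, rfl⟩
  have hbdd : BddAbove V :=
    ⟨_, by rintro _ ⟨a, b, w, hab, rfl⟩; exact preimageCount_le hinj hs hab w⟩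
  have hbounds : ∀ (a b : ℤ) w, a + 2 * s ≤ b →
      sInf V ≤ preimageCount f r a b w ∧ preimageCount f r a b w ≤ sSup V :=
    fun a b w hab => ⟨Nat.sInf_le ⟨a, b, w, hab, rfl⟩, le_csSup hbdd ⟨a, b, w, hab, rfl⟩⟩
  obtain ⟨a₁, b₁, v₁, h₁, hv₁⟩ := Nat.sInf_mem hV
  obtain ⟨a₂, b₂, v₂, h₂, hv₂⟩ := Nat.sSup_mem hV hbdd
  -- glue the word `v₁` of minimal count to a translate of the word `v₂` of maximal count
  set i := b₁ + 1 - a₂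
  set w : ℤ → A := fun j => if j ≤ b₁ then v₁ j else v₂ (j - i)
  have hw₁ : preimageCount f r a₁ b₁ w = sInf V := by
    rw [← hv₁]
    exact preimageCount_congr fun j hj => if_pos (mem_Icc.mp hj).2
  have hw₂ : preimageCount f r (a₂ + i) (b₂ + i) w = sSup V := by
    rw [hf.preimageCount_translate, ← hv₂]
    refine preimageCount_congr fun j hj => ?_
    simp only [mem_Icc] at hj
    simp only [w, if_neg (show ¬ j + i ≤ b₁ by omega), add_sub_cancel_right]
  have hglue : sInf V = sSup V := calc
    sInf V = preimageCount f r a₁ b₁ w := hw₁.symm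
    _ = preimageCount f r a₁ (b₂ + i) w :=
        (hf.preimageCount_extend_eq (by omega) le_rfl (by omega)
          (Or.inl fun w' => hw₁ ▸ (hbounds _ _ w' (by omega)).1)).symm
    _ = preimageCount f r (a₂ + i) (b₂ + i) w :=
        hf.preimageCount_extend_eq (by omega) (by omega) le_rfl
          (Or.inr fun w' => hw₂ ▸ (hbounds _ _ w' (by omega)).2)
    _ = sSup V := hw₂
  exact ⟨sInf V, fun a b w hab =>
    le_antisymm (hglue ▸ (hbounds a b w hab).2) (hbounds a b w hab).1⟩

theorem HasRadius.preimageCount_eq_pow (hf : HasRadius r f) (hinj : Injective f) {s : ℕ}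
    (hs : HasRadius s (invFun f)) {a b : ℤ} (hab : a + 2 * s ≤ b) (w : ℤ → A) :
    preimageCount f r a b w = Fintype.card A ^ (2 * r) := by
  obtain ⟨μ, hμ⟩ := hf.exists_preimageCount_eq hinj hs
  have hsum := sum_preimageCount (f := f) (r := r) a b univ
  simp only [mem_univ, patternCount_true] at hsum
  rw [sum_congr rfl fun z _ => hμ a b (pad _ z) hab, sum_const, card_univ, Fintype.card_fun,
    Fintype.card_coe, smul_eq_mul, show #(Icc (a - r) (b + r)) = #(Icc a b) + 2 * r by
      simp only [Int.card_Icc]; omega, pow_add] at hsum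
  rw [hμ a b w hab]
  exact Nat.eq_of_mul_eq_mul_left (by positivity) hsum

end PreimageCount

section Inverse

variable {A : Type}

lemma HasRadius.continuous [Nonempty A] [TopologicalSpace A] [DiscreteTopology A]
    {f : (ℤ → A) → (ℤ → A)} {r : ℕ} (h : HasRadius r f) : Continuous f := by
  refine continuous_pi fun i => ?_
  obtain ⟨g, hg⟩ := dependsOn_iff_exists_comp.mp (h.dependsOn i)
  rw [hg]
  exact continuous_of_discreteTopology.comp (continuous_pi fun j => continuous_apply _)

lemma Continuous.exists_finset_dependsOn {ι B : Type*} [TopologicalSpace A] [DiscreteTopology A]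
    [CompactSpace (ι → A)] [TopologicalSpace B] [DiscreteTopology B] {g : (ι → A) → B}
    (hg : Continuous g) : ∃ I : Finset ι, DependsOn g (I : Set ι) := by
  classical
  have hcyl : ∀ x, ∃ I : Finset ι, ∀ y, (∀ j ∈ I, y j = x j) → g y = g x := fun x => by
    have hx : {y | g y = g x} ∈ nhds x := hg.continuousAt (isOpen_discrete {g x} |>.mem_nhds rfl)
    rw [nhds_pi, Filter.mem_pi'] at hx
    obtain ⟨I, t, ht, hIt⟩ := hx
    exact ⟨I, fun y hy => hIt fun j hj => hy j hj ▸ mem_of_mem_nhds (ht j)⟩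
  choose I hI using hcyl
  obtain ⟨S, hS⟩ := CompactSpace.elim_nhds_subcover (fun x => Set.pi (I x : Set ι) fun j => {x j})
    fun x => set_pi_mem_nhds (I x).finite_toSet fun j _ => isOpen_discrete {x j} |>.mem_nhds rfl
  refine ⟨S.biUnion I, fun y z hyz => ?_⟩
  have hy : y ∈ ⋃ x ∈ S, Set.pi (I x : Set ι) fun j => {x j} := hS ▸ Set.mem_univ y
  simp only [Set.mem_iUnion, Set.mem_pi, Set.mem_singleton_iff, mem_coe] at hy
  obtain ⟨x, hxS, hyx⟩ := hy
  have hsub : ∀ j ∈ I x, j ∈ S.biUnion I := fun j hj => mem_biUnion.mpr ⟨x, hxS, hj⟩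
  rw [hI x y fun j hj => hyx j hj, hI x z fun j hj => (hyz j (hsub j hj)).symm.trans (hyx j hj)]

lemma isCA_of_continuous [TopologicalSpace A] [DiscreteTopology A] [CompactSpace (ℤ → A)]
    {g : (ℤ → A) → (ℤ → A)} (hg : Continuous g)
    (hcomm : ∀ x i, g (fun j => x (j - i)) = fun k => g x (k - i)) : IsCA g := by
  obtain ⟨I, hI⟩ := ((continuous_apply 0).comp hg).exists_finset_dependsOn
  refine ⟨I.sup Int.natAbs, fun x => g x 0, fun x y hxy => hI fun j hj => hxy j ?_, fun x i => ?_⟩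
  · rw [Int.abs_eq_natAbs]
    exact_mod_cast le_sup (f := Int.natAbs) hj
  · have := congrFun (hcomm (fun j => x (i + j)) i) i
    simp only [add_sub_cancel, sub_self] at this
    exact this

lemma IsCA.invFun [Nonempty A] [Finite A] {c : (ℤ → A) → (ℤ → A)} (hc : IsCA c)
    (hcb : Bijective c) : IsCA (Function.invFun c) := by
  obtain ⟨r, hr⟩ := hc
  let _ : TopologicalSpace A := ⊥
  have : DiscreteTopology A := ⟨rfl⟩
  have hinv : Function.invFun c =
      (hr.continuous.homeoOfEquivCompactToT2 (f := Equiv.ofBijective c hcb)).symm := by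
    funext x
    apply hcb.injective
    rw [rightInverse_invFun hcb.surjective]
    exact ((Equiv.ofBijective c hcb).apply_symm_apply x).symm
  refine isCA_of_continuous (hinv ▸ Homeomorph.continuous _) fun x i => hcb.injective ?_
  funext k
  rw [rightInverse_invFun hcb.surjective, hr.apply_translate, rightInverse_invFun hcb.surjective]

lemma HasRadius.exists_apply_ne_of_invFun_ne [Nonempty A] {c d : (ℤ → A) → (ℤ → A)} {s : ℕ}
    (hcs : HasRadius s (Function.invFun c)) (hc : Injective c) (hd : Injective d) {y : ℤ → A}
    (hy : Function.invFun c (d y) 0 ≠ Function.invFun d (d y) 0) :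
    ∃ i ∈ Icc (-s : ℤ) s, c y i ≠ d y i := by
  by_contra! h
  refine hy ((hcs.dependsOn 0 fun j hj => (h j (by simpa using hj)).symm).trans ?_)
  simp only [leftInverse_invFun hc y, leftInverse_invFun hd y]

end Inverse

section Density

attribute [local instance] Classical.propDecidable

variable {A : Type} [Nonempty A] [Fintype A]

/-- The uniform Bernoulli measure of `P`, computed on the window `t`. -/
noncomputable def density (t : Finset ℤ) (P : (ℤ → A) → Prop) : ℝ :=
  patternCount t P / (Fintype.card A : ℝ) ^ #t

lemma density_mono {t : Finset ℤ} {P Q : (ℤ → A) → Prop} (h : ∀ x, P x → Q x) :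
    density t P ≤ density t Q :=
  div_le_div_of_nonneg_right (by exact_mod_cast patternCount_mono h) (by positivity)

lemma density_exists_le_sum {ι : Type*} (t : Finset ℤ) (I : Finset ι)
    (Q : ι → (ℤ → A) → Prop) :
    density t (fun x => ∃ i ∈ I, Q i x) ≤ ∑ i ∈ I, density t (Q i) := by
  simp only [density, ← sum_div]
  exact div_le_div_of_nonneg_right (by exact_mod_cast patternCount_exists_le_sum t I Q)
    (by positivity)

lemma density_of_subset {s t : Finset ℤ} (hst : s ⊆ t) {P : (ℤ → A) → Prop}
    (hP : DependsOn P (s : Set ℤ)) : density t P = density s P := by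
  have hq : (0 : ℝ) < Fintype.card A := by exact_mod_cast Fintype.card_pos
  rw [density, density, patternCount_of_subset hst hP, Nat.cast_mul, Nat.cast_pow,
    ← Nat.sub_add_cancel (card_le_card hst), pow_add, Nat.add_sub_cancel]
  field_simp

lemma density_translate (i a b : ℤ) (P : (ℤ → A) → Prop) :
    density (Icc (a + i) (b + i)) P = density (Icc a b) (fun x => P fun j => x (j - i)) := by
  rw [density, density, patternCount_translate,
    show #(Icc (a + i) (b + i)) = #(Icc a b) by simp only [Int.card_Icc]; omega]

lemma HasRadius.density_apply_ne {c d : (ℤ → A) → (ℤ → A)} {r : ℕ} (hc : HasRadius r c)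
    (hd : HasRadius r d) {i : ℤ} {t : Finset ℤ} (ht : Icc (i - r) (i + r) ⊆ t) :
    density t (fun x => c x i ≠ d x i) = density (Icc (-r) r) (fun x => c x 0 ≠ d x 0) := by
  rw [density_of_subset ht (hc.dependsOn_apply_ne hd i), sub_eq_neg_add, add_comm (i : ℤ),
    density_translate]
  simp only [hc.apply_translate, hd.apply_translate, sub_self]

lemma HasRadius.deltaR_eq_density {c d : (ℤ → A) → (ℤ → A)} {r : ℕ} (hc : HasRadius r c)
    (hd : HasRadius r d) :
    deltaR r c d = density (Icc (-r) r) (fun x => c x 0 ≠ d x 0) := by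
  let D : Set (Icc (-r : ℤ) r → A) := diffSet r c d
  have hD : D = ↑({u | c (pad _ u) 0 ≠ d (pad _ u) 0} : Finset (Icc (-r : ℤ) r → A)) := by
    ext u
    simp only [D, diffSet, coe_filter, mem_univ, true_and]
    have h := hc.dependsOn_apply_ne hd 0
    simp only [zero_sub, zero_add] at h
    refine ⟨fun ⟨x, hxu, hx⟩ => ?_, fun hu => ⟨pad _ u, fun j => pad_apply u j, hu⟩⟩
    rwa [← h.apply_pad x, show (fun j : Icc (-r : ℤ) r => x j) = u from funext hxu] at hx
  rw [deltaR, show (diffSet r c d).ncard = D.ncard from rfl, hD, Set.ncard_coe_finset, density,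
    patternCount, Int.card_Icc, show (r + 1 - -r : ℤ).toNat = 2 * r + 1 by omega]
  congr

lemma HasRadius.density_comp {f : (ℤ → A) → (ℤ → A)} {r : ℕ} (hf : HasRadius r f)
    (hinj : Injective f) {s : ℕ} (hs : HasRadius s (invFun f)) {a b : ℤ} (hab : a + 2 * s ≤ b)
    {P : (ℤ → A) → Prop} (hP : DependsOn P (Icc a b : Set ℤ)) :
    density (Icc (a - r) (b + r)) (fun x => P (f x)) = density (Icc a b) P := by
  set Z : Finset (Icc a b → A) := {z | P (pad _ z)}
  have hsum := sum_preimageCount (f := f) (r := r) a b Z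
  rw [sum_congr rfl fun z _ => hf.preimageCount_eq_pow hinj hs hab _, sum_const,
    smul_eq_mul] at hsum
  have hmem : ∀ x, ((fun j : Icc a b => f x j) ∈ Z) = P (f x) := fun x => by
    simp only [Z, mem_filter, mem_univ, true_and]
    exact hP.apply_pad (f x)
  simp only [hmem] at hsum
  have hq : (0 : ℝ) < Fintype.card A := by exact_mod_cast Fintype.card_pos
  rw [density, density, ← hsum, show #(Icc (a - r) (b + r)) = #(Icc a b) + 2 * r by
    simp only [Int.card_Icc]; omega, show #Z = patternCount (Icc a b) P by rw [patternCount]]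
  push_cast
  field_simp
  ring

end Density

theorem stmt4_general {A : Type} [Fintype A] [Nonempty A]
    (c d : (ℤ → A) → (ℤ → A)) (hc : IsCA c) (hd : IsCA d)
    (hcb : Function.Bijective c) (hdb : Function.Bijective d)
    (hr : rad c < rad d)
    (hr' : rad (Function.invFun c) < rad (Function.invFun d)) :
    delta (Function.invFun c) (Function.invFun d) ≤
      (2 * (rad (Function.invFun c) : ℝ) + 1) * delta c d := by
  set r := rad d
  set s := rad (invFun c)
  set s' := rad (invFun d)
  have hcr : HasRadius r c := hc.hasRadius_rad.mono hr.le
  have hdr : HasRadius r d := hd.hasRadius_rad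
  have hcs : HasRadius s (invFun c) := (hc.invFun hcb).hasRadius_rad
  have hcs' : HasRadius s' (invFun c) := hcs.mono hr'.le
  have hds : HasRadius s' (invFun d) := (hd.invFun hdb).hasRadius_rad
  set W := Icc (-s' - r : ℤ) (s' + r)
  rw [delta, delta, max_eq_right hr'.le, max_eq_right hr.le, hcs'.deltaR_eq_density hds,
    hcr.deltaR_eq_density hdr]
  calc density (Icc (-s' : ℤ) s') (fun x => invFun c x 0 ≠ invFun d x 0)
      = density W (fun y => invFun c (d y) 0 ≠ invFun d (d y) 0) :=
        (hdr.density_comp hdb.injective hds (by omega)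
          (by simpa using hcs'.dependsOn_apply_ne hds 0)).symm
    _ ≤ density W (fun y => ∃ i ∈ Icc (-s : ℤ) s, c y i ≠ d y i) :=
        density_mono fun y => hcs.exists_apply_ne_of_invFun_ne hcb.injective hdb.injective
    _ ≤ ∑ i ∈ Icc (-s : ℤ) s, density W (fun y => c y i ≠ d y i) := density_exists_le_sum _ _ _
    _ = ∑ i ∈ Icc (-s : ℤ) s, density (Icc (-r : ℤ) r) (fun y => c y 0 ≠ d y 0) :=
        sum_congr rfl fun i hi => hcr.density_apply_ne hdr <| by
          simp only [mem_Icc] at hi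
          exact Icc_subset_Icc (by omega) (by omega)
    _ = (2 * s + 1) * density (Icc (-r : ℤ) r) (fun y => c y 0 ≠ d y 0) := by
        rw [sum_const, Int.card_Icc, nsmul_eq_mul,
          show (s + 1 - -s : ℤ).toNat = 2 * s + 1 by omega]
        push_cast
        rfl

/-- inversion is continuous on reversible cellular automata:
if `r(d) > r(c)` and `r(d⁻¹) > r(c⁻¹)` then
`δ(c⁻¹, d⁻¹) ≤ (2 r(c⁻¹) + 1) δ(c, d)`. -/
theorem stmt4 {A : Type} [Fintype A] [Nonempty A] (hA : 2 ≤ Fintype.card A)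
    (c d : (ℤ → A) → (ℤ → A)) (hc : IsCA c) (hd : IsCA d)
    (hcb : Function.Bijective c) (hdb : Function.Bijective d)
    (hr : rad c < rad d)
    (hr' : rad (Function.invFun c) < rad (Function.invFun d)) :
    delta (Function.invFun c) (Function.invFun d) ≤
      (2 * (rad (Function.invFun c) : ℝ) + 1) * delta c d :=
  stmt4_general c d hc hd hcb hdb hr hr'
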